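/- Let (G,λ) be a temporal graph, where G is a finite graph and λ assigns to each edge of G a set of time labels from {1,…,τ}. Define F : V(G) × V(G) × {1,…,τ+1} × {1,…,τ+1} → ℕ ∪ {∞} by F(u,v,t₁,t₂) = 1 if uv is an edge of G, t₁ ∈ λ(uv) and t₂ = t₁+1; F(v,v,t₁,t₂) = 0 whenever t₁ < t₂; and F(u,v,t₁,t₂) = ∞ otherwise. Then for all vertices u,v of G and every ℓ ∈ ℕ, there is a valid walk on (G,F) from u to v with exactly ℓ quadruples (and hence cost ℓ) if and only if there is a strict temporal walk from u to v in (G,λ) using exactly ℓ edges, i.e., a sequence of edges e₁,…,e_ℓ of G and times s₁ < s₂ < ⋯ < s_ℓ such that e₁,…,e_ℓ form a walk from u to v in G and s_i ∈ λ(e_i) for each i. -/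

import Mathlib

/-- The source vertex of a quadruple `(u, v, t₁, t₂)`. -/
def qsrc {V : Type*} (q : V × V × ℕ × ℕ) : V := q.1

/-- The destination vertex of a quadruple `(u, v, t₁, t₂)`. -/
def qdst {V : Type*} (q : V × V × ℕ × ℕ) : V := q.2.1

/-- The departure time of a quadruple `(u, v, t₁, t₂)`. -/
def qdep {V : Type*} (q : V × V × ℕ × ℕ) : ℕ := q.2.2.1

/-- The arrival time of a quadruple `(u, v, t₁, t₂)`. -/
def qarr {V : Type*} (q : V × V × ℕ × ℕ) : ℕ := q.2.2.2

/-- A valid walk on a temporal cost graph with cost function `F`: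
consecutive quadruples match up, every quadruple has `t < t'` and finite cost,
and arrival times precede subsequent departure times. -/
def IsValidWalk {V : Type*} (F : V → V → ℕ → ℕ → ℕ∞) (W : List (V × V × ℕ × ℕ)) : Prop :=
  (∀ i, ∀ hi : i + 1 < W.length, qdst (W[i]'(Nat.lt_of_succ_lt hi)) = qsrc (W[i + 1]'hi)) ∧
  (∀ q ∈ W, qdep q < qarr q ∧ F (qsrc q) (qdst q) (qdep q) (qarr q) < ⊤) ∧
  (∀ i, ∀ hi : i + 1 < W.length, qarr (W[i]'(Nat.lt_of_succ_lt hi)) ≤ qdep (W[i + 1]'hi))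

/-- The cost of a walk: the sum of the costs of its quadruples. -/
def walkCost {V : Type*} (F : V → V → ℕ → ℕ → ℕ∞) (W : List (V × V × ℕ × ℕ)) : ℕ∞ :=
  (W.map fun q => F (qsrc q) (qdst q) (qdep q) (qarr q)).sum

/-- The list of vertices visited by a walk, namely `u₁, v₁, v₂, …, v_ℓ`. -/
def visited {V : Type*} : List (V × V × ℕ × ℕ) → List V
  | [] => []
  | q :: rest => qsrc q :: (q :: rest).map qdst

/-- The (nonempty) walk `W` is from `s` to `t`. -/
def WalkFrom {V : Type*} (W : List (V × V × ℕ × ℕ)) (s t : V) : Prop :=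
  ∃ q1 ql, W.head? = some q1 ∧ W.getLast? = some ql ∧ qsrc q1 = s ∧ qdst ql = t

open scoped Classical in
/-- The cost function of the temporal cost graph obtained from a temporal graph
`(G, λ)`: traversing an edge costs `1` exactly when the departure time is a label of
that edge and the arrival time is one later; staying put is free; everything else is
impossible. -/
noncomputable def tgF {V : Type*} (G : SimpleGraph V) (lam : Sym2 V → Finset ℕ) :
    V → V → ℕ → ℕ → ℕ∞ := fun u v t₁ t₂ =>
  if u = v then (if t₁ < t₂ then 0 else ⊤)
  else if G.Adj u v ∧ t₁ ∈ lam s(u, v) ∧ t₂ = t₁ + 1 then 1 else ⊤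

/-!
A finite value of `tgF` is `0` or `1`, and it is `1` exactly on an edge traversal `(a, b, t, t + 1)`
with `t ∈ λ(ab)`. Hence a valid walk whose cost equals its number of quadruples consists of edge
traversals only: their endpoints chain into a walk of `G`, and the departure times increase
strictly, since each arrival `t + 1` precedes the next departure. Conversely, a strict temporal
walk `v₀ v₁ … v_ℓ` with times `s₀ < ⋯ < s_{ℓ-1}` is the valid walk with quadruples
`(vᵢ, vᵢ₊₁, sᵢ, sᵢ + 1)`.
-/

theorem ENat.list_sum_eq_length_iff_forall_eq_one {L : List ℕ∞} (h : ∀ x ∈ L, x ≤ 1) :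
    L.sum = L.length ↔ ∀ x ∈ L, x = 1 := by
  refine ⟨fun hsum => ?_, fun h1 => by simp [List.sum_eq_card_nsmul L 1 h1]⟩
  induction L with
  | nil => simp
  | cons a L ih =>
    simp only [List.mem_cons, forall_eq_or_imp] at h ⊢
    have hL : L.sum ≤ L.length := by simpa using List.sum_le_card_nsmul L 1 h.2
    lift a to ℕ using ne_top_of_le_ne_top ENat.one_ne_top h.1
    lift L.sum to ℕ using ne_top_of_le_ne_top (ENat.natCast_ne_top _) hL with n hn
    simp only [List.sum_cons, List.length_cons, ← hn] at hsum
    norm_cast at hsum hL h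
    exact ⟨by norm_cast; omega, ih h.2 (by norm_cast; omega)⟩

section

variable {V : Type*} {G : SimpleGraph V} {lam : Sym2 V → Finset ℕ} {a b : V} {t₁ t₂ : ℕ}

theorem tgF_le_one_of_lt_top (h : tgF G lam a b t₁ t₂ < ⊤) : tgF G lam a b t₁ t₂ ≤ 1 := by
  unfold tgF at h ⊢
  split_ifs at h ⊢ <;> simp_all

theorem tgF_eq_one_iff : tgF G lam a b t₁ t₂ = 1 ↔ G.Adj a b ∧ t₁ ∈ lam s(a, b) ∧ t₂ = t₁ + 1 := by
  unfold tgF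
  split_ifs <;> simp_all

end

theorem isValidWalk_iff {V : Type*} {F : V → V → ℕ → ℕ → ℕ∞} {W : List (V × V × ℕ × ℕ)} :
    IsValidWalk F W ↔ W.IsChain (fun q q' => qdst q = qsrc q') ∧
      (∀ q ∈ W, qdep q < qarr q ∧ F (qsrc q) (qdst q) (qdep q) (qarr q) < ⊤) ∧
      W.IsChain (fun q q' => qarr q ≤ qdep q') := by
  simp only [IsValidWalk, List.isChain_iff_getElem]

theorem isValidWalk_tgF_and_walkCost_eq_length_iff {V : Type*} {G : SimpleGraph V}
    {lam : Sym2 V → Finset ℕ} {W : List (V × V × ℕ × ℕ)} :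
    IsValidWalk (tgF G lam) W ∧ walkCost (tgF G lam) W = W.length ↔
      W.IsChain (fun q q' => qdst q = qsrc q') ∧ W.IsChain (fun q q' => qarr q ≤ qdep q') ∧
      ∀ q ∈ W, G.Adj (qsrc q) (qdst q) ∧ qdep q ∈ lam s(qsrc q, qdst q) ∧ qarr q = qdep q + 1 := by
  rw [isValidWalk_iff, walkCost]
  constructor
  · rintro ⟨⟨hsrc, hfin, htime⟩, hcost⟩
    have hle : ∀ x ∈ W.map fun q => tgF G lam (qsrc q) (qdst q) (qdep q) (qarr q), x ≤ 1 :=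
      List.forall_mem_map.2 fun q hq => tgF_le_one_of_lt_top (hfin q hq).2
    have hone := (ENat.list_sum_eq_length_iff_forall_eq_one hle).1 (by rwa [List.length_map])
    exact ⟨hsrc, htime, fun q hq => tgF_eq_one_iff.1 (hone _ (List.mem_map_of_mem hq))⟩
  · rintro ⟨hsrc, htime, hstep⟩
    have hone : ∀ q ∈ W, tgF G lam (qsrc q) (qdst q) (qdep q) (qarr q) = 1 :=
      fun q hq => tgF_eq_one_iff.2 (hstep q hq)
    refine ⟨⟨hsrc, fun q hq => ⟨by rw [(hstep q hq).2.2]; omega, by simp [hone q hq]⟩, htime⟩, ?_⟩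
    rw [← List.length_map (f := fun q => tgF G lam (qsrc q) (qdst q) (qdep q) (qarr q)),
      ENat.list_sum_eq_length_iff_forall_eq_one (List.forall_mem_map.2 fun q hq => (hone q hq).le)]
    exact List.forall_mem_map.2 hone

theorem SimpleGraph.exists_walk_edges_eq_of_isChain {V : Type*} {G : SimpleGraph V} :
    ∀ (l : List (V × V)) {u v : V}, (∀ e ∈ l, G.Adj e.1 e.2) →
      l.IsChain (fun e e' => e.2 = e'.1) → (l = [] → u = v) → (∀ e ∈ l.head?, e.1 = u) →
      (∀ e ∈ l.getLast?, e.2 = v) → ∃ p : G.Walk u v, p.edges = l.map fun e => s(e.1, e.2)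
  | [], _, _, _, _, hnil, _, _ => by
    obtain rfl := hnil rfl
    exact ⟨.nil, rfl⟩
  | [(a, b)], _, _, hadj, _, _, hhead, hlast => by
    obtain rfl : a = _ := hhead _ rfl
    obtain rfl : b = _ := hlast _ rfl
    exact ⟨.cons (hadj _ List.mem_cons_self) .nil, rfl⟩
  | (a, b) :: e :: l, _, _, hadj, hchain, _, hhead, hlast => by
    obtain rfl : a = _ := hhead _ rfl
    obtain ⟨p, hp⟩ := exists_walk_edges_eq_of_isChain (e :: l)
      (fun e he => hadj e (List.mem_cons_of_mem _ he)) hchain.of_cons (by simp)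
      (by simpa using hchain.rel.symm) (fun e' he' => hlast e' (by simpa using he'))
    exact ⟨.cons (hadj _ List.mem_cons_self) p, by simp [hp]⟩

theorem sortedLT_map_qdep {V : Type*} {W : List (V × V × ℕ × ℕ)}
    (htime : W.IsChain (fun q q' => qarr q ≤ qdep q')) (hstep : ∀ q ∈ W, qdep q < qarr q) :
    (W.map qdep).SortedLT :=
  List.sortedLT_iff_isChain.2 <| (List.isChain_map qdep).2 <|
    htime.imp_of_mem_imp fun q _ hq _ h => (hstep q hq).trans_le h

namespace SimpleGraph.Walk

variable {V : Type*} {G : SimpleGraph V} {u v : V}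

def toQuads (p : G.Walk u v) (s : Fin p.length → ℕ) : List (V × V × ℕ × ℕ) :=
  List.ofFn fun i => (p.getVert i, p.getVert (i + 1), s i, s i + 1)

variable (p : G.Walk u v) (s : Fin p.length → ℕ)

@[simp]
theorem length_toQuads : (p.toQuads s).length = p.length := List.length_ofFn

theorem getElem_toQuads (i : ℕ) (hi : i < (p.toQuads s).length) :
    (p.toQuads s)[i] = (p.getVert i, p.getVert (i + 1), s ⟨i, by simpa using hi⟩,
      s ⟨i, by simpa using hi⟩ + 1) :=
  List.getElem_ofFn ..

theorem eq_of_toQuads_eq_nil (h : p.toQuads s = []) : u = v :=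
  eq_of_length_eq_zero (by simpa using congrArg List.length h)

theorem qsrc_of_mem_head?_toQuads {q : V × V × ℕ × ℕ} (hq : q ∈ (p.toQuads s).head?) :
    qsrc q = u := by
  obtain ⟨h0, rfl⟩ := List.getElem?_eq_some_iff.1 (List.head?_eq_getElem? ▸ hq)
  simp [getElem_toQuads, qsrc]

theorem qdst_of_mem_getLast?_toQuads {q : V × V × ℕ × ℕ} (hq : q ∈ (p.toQuads s).getLast?) :
    qdst q = v := by
  obtain ⟨hl, rfl⟩ := List.getElem?_eq_some_iff.1 (List.getLast?_eq_getElem? ▸ hq)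
  have : (p.toQuads s).length - 1 + 1 = p.length := by simp at hl ⊢; omega
  simp only [getElem_toQuads, qdst, this, getVert_length]

theorem isValidWalk_toQuads_and_walkCost_eq_length {lam : Sym2 V → Finset ℕ}
    (hs : StrictMono s)
    (hlab : ∀ i : Fin p.length, s i ∈ lam (p.edges[(i : ℕ)]'(by simp))) :
    IsValidWalk (tgF G lam) (p.toQuads s) ∧
      walkCost (tgF G lam) (p.toQuads s) = (p.toQuads s).length := by
  refine isValidWalk_tgF_and_walkCost_eq_length_iff.2 ⟨?_, ?_, ?_⟩
  · exact List.isChain_iff_getElem.2 fun i hi => by simp [getElem_toQuads, qdst, qsrc]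
  · refine List.isChain_iff_getElem.2 fun i hi => ?_
    simp only [getElem_toQuads, qarr, qdep]
    exact hs (Fin.mk_lt_mk.2 i.lt_succ_self)
  · intro q hq
    obtain ⟨i, hi, rfl⟩ := List.mem_iff_getElem.1 hq
    have hi' : i < p.length := by simpa using hi
    have hlab_i := hlab ⟨i, hi'⟩
    rw [getElem_edges] at hlab_i
    simpa [getElem_toQuads, qsrc, qdst, qdep, qarr] using ⟨p.adj_getVert_succ hi', hlab_i⟩

end SimpleGraph.Walk

/-- There is a valid walk with exactly `ℓ` quadruples (and hence cost `ℓ`) from `u` to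
`v` on the temporal cost graph of `(G, λ)` iff there is a strict temporal walk from `u`
to `v` in `(G, λ)` using exactly `ℓ` edges. -/
theorem valid_walk_iff_strict_temporal_walk {V : Type*}
    (G : SimpleGraph V) (lam : Sym2 V → Finset ℕ)
    (u v : V) (l : ℕ) :
    (∃ W : List (V × V × ℕ × ℕ), IsValidWalk (tgF G lam) W ∧ W.length = l ∧
        walkCost (tgF G lam) W = (l : ℕ∞) ∧
        (W = [] → u = v) ∧ (∀ q, W.head? = some q → qsrc q = u) ∧
        (∀ q, W.getLast? = some q → qdst q = v)) ↔
    (∃ (p : G.Walk u v) (hlen : p.length = l) (s : Fin l → ℕ), StrictMono s ∧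
        ∀ i : Fin l, s i ∈ lam (p.edges[(i : ℕ)]'(by
          rw [SimpleGraph.Walk.length_edges, hlen]; exact i.isLt))) := by
  constructor
  · rintro ⟨W, hW, rfl, hcost, hnil, hhead, hlast⟩
    obtain ⟨hsrc, htime, hstep⟩ := isValidWalk_tgF_and_walkCost_eq_length_iff.1 ⟨hW, hcost⟩
    obtain ⟨p, hp⟩ := SimpleGraph.exists_walk_edges_eq_of_isChain
      (W.map fun q => (qsrc q, qdst q)) (List.forall_mem_map.2 fun q hq => (hstep q hq).1)
      ((List.isChain_map _).2 hsrc) (by simpa using hnil)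
      (by rw [List.head?_map, Option.forall_mem_map]; exact hhead)
      (by rw [List.getLast?_map, Option.forall_mem_map]; exact hlast)
    have hmono := (sortedLT_map_qdep htime fun q hq => (hW.2.1 q hq).1).strictMono_get
    refine ⟨p, by simpa using congrArg List.length hp, fun i => qdep W[i], fun i j hij => ?_,
      fun i => ?_⟩
    · simpa using @hmono ⟨i, by simp⟩ ⟨j, by simp⟩ hij
    · simpa [hp] using (hstep _ (W.getElem_mem i.isLt)).2.1
  · rintro ⟨p, rfl, s, hs, hlab⟩
    obtain ⟨hW, hcost⟩ := p.isValidWalk_toQuads_and_walkCost_eq_length s hs hlab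
    exact ⟨p.toQuads s, hW, p.length_toQuads s, by rwa [← p.length_toQuads s],
      p.eq_of_toQuads_eq_nil s, fun _ => p.qsrc_of_mem_head?_toQuads s,
      fun _ => p.qdst_of_mem_getLast?_toQuads s⟩
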